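/- Let n ≥ 1 and let I ⊆ {1,…,n} be nonempty with Σ_{i∈I} i odd. Then the I-canonical elements for the integer lattice 𝔍_Spin of Spin(2n+1) are precisely the elements ξ_I^j = H_j + ξ_I where ξ_I = Σ_{i∈I} H_i and j ranges over the odd elements of I. Moreover, for 1 ≤ k < n, r_{ρ_k}(ξ_I^j) = r_{ρ_k}(ξ_I) + 2·min{j,k}, where r_{ρ_k}(ξ_I) = 2|I| + 2|I∩{2,…,n}| + ⋯ + 2|I∩{k,…,n}|; and r_{ρ_n}(ξ_I^j) = r_{ρ_n}(ξ_I) + j, where r_{ρ_n}(ξ_I) = Σ_{t=1}^n |I∩{t,…,n}|. -/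
import Mathlib


/-- `H_i = E_1 + ⋯ + E_i` for `so(2n+1)` (1-based index `i`). -/
def Hspin (n i : ℕ) : Fin n → ℝ := fun j => if (j : ℕ) + 1 ≤ i then 1 else 0

/-- The integer lattice of `Spin(2n+1)`: integer vectors with even coordinate sum. -/
def JSpin (n : ℕ) : Set (Fin n → ℝ) :=
  {v | ∃ a : Fin n → ℤ, (∀ j, v j = a j) ∧ Even (∑ j, a j)}

/-- The set of `I`-canonical elements for a lattice `𝔏 ⊆ ℝ^n`. -/
def ICanonSet (n : ℕ) (𝔏 : Set (Fin n → ℝ)) (H : ℕ → Fin n → ℝ) (I : Finset ℕ) :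
    Set (Fin n → ℝ) :=
  {ξ | ∃ c : ℕ → ℕ, (∀ i ∈ I, 1 ≤ c i) ∧ ξ = ∑ i ∈ I, c i • H i ∧ ξ ∈ 𝔏 ∧
    ∀ c' : ℕ → ℕ, (∀ i ∈ I, 1 ≤ c' i ∧ c' i ≤ c i) →
      (∑ i ∈ I, c' i • H i) ∈ 𝔏 → (∑ i ∈ I, c' i • H i) = ξ}

/-- Sum of the first `k` (1-based) coordinates of `v`. -/
def partialSum (n : ℕ) (v : Fin n → ℝ) (k : ℕ) : ℝ :=
  ∑ j ∈ Finset.univ.filter (fun j : Fin n => (j : ℕ) + 1 ≤ k), v j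

lemma filter_range_lt (n m : ℕ) : (Finset.range n).filter (· < m) = Finset.range (min m n) := by
  ext j; simp [Nat.lt_min, and_comm]

lemma sum_fin_ite_lt_nat (n m : ℕ) :
    ∑ j : Fin n, (if (j:ℕ) + 1 ≤ m then (1:ℕ) else 0) = min m n := by
  rw [Fin.sum_univ_eq_sum_range (fun j => if j + 1 ≤ m then (1:ℕ) else 0)]
  simp only [Nat.add_one_le_iff]
  rw [Finset.sum_boole, filter_range_lt]
  simp

lemma sum_fin_ite_lt_real (n m : ℕ) :
    ∑ j : Fin n, (if (j:ℕ) + 1 ≤ m then (1:ℝ) else 0) = (min m n : ℕ) := by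
  rw [← sum_fin_ite_lt_nat n m]
  push_cast [apply_ite]
  rfl

lemma sum_smul_Hspin_apply (n : ℕ) (I : Finset ℕ) (c : ℕ → ℕ) (j : Fin n) :
    (∑ i ∈ I, c i • Hspin n i) j
      = ((∑ i ∈ I, c i * (if (j:ℕ) + 1 ≤ i then 1 else 0) : ℕ) : ℝ) := by
  rw [Finset.sum_apply]
  push_cast
  refine Finset.sum_congr rfl fun i _ => ?_
  simp only [Pi.smul_apply, Hspin, nsmul_eq_mul]

lemma sum_coord_total (n : ℕ) (I : Finset ℕ) (hI : I ⊆ Finset.Icc 1 n) (c : ℕ → ℕ) :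
    ∑ j : Fin n, (∑ i ∈ I, c i * (if (j:ℕ) + 1 ≤ i then 1 else 0))
      = ∑ i ∈ I, c i * i := by
  rw [Finset.sum_comm]
  refine Finset.sum_congr rfl fun i hi => ?_
  rw [← Finset.mul_sum, sum_fin_ite_lt_nat]
  have := Finset.mem_Icc.mp (hI hi)
  rw [min_eq_left this.2]

lemma mem_JSpin_iff (n : ℕ) (I : Finset ℕ) (hI : I ⊆ Finset.Icc 1 n) (c : ℕ → ℕ) :
    (∑ i ∈ I, c i • Hspin n i) ∈ JSpin n ↔ Even (∑ i ∈ I, c i * i) := by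
  constructor
  · rintro ⟨a, ha, hev⟩
    have haj : ∀ j, a j = ((∑ i ∈ I, c i * (if (j:ℕ) + 1 ≤ i then 1 else 0) : ℕ) : ℤ) := by
      intro j
      have h1 := ha j
      rw [sum_smul_Hspin_apply] at h1
      exact_mod_cast h1.symm
    have h2 : (∑ j, a j) = ((∑ i ∈ I, c i * i : ℕ) : ℤ) := by
      rw [← sum_coord_total n I hI c]
      push_cast
      exact Finset.sum_congr rfl fun j _ => by rw [haj]; push_cast; ring
    rw [h2] at hev
    exact_mod_cast hev
  · intro hev
    refine ⟨fun j => ((∑ i ∈ I, c i * (if (j:ℕ) + 1 ≤ i then 1 else 0) : ℕ) : ℤ),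
      fun j => by rw [sum_smul_Hspin_apply]; push_cast; ring, ?_⟩
    have h2 : (∑ j : Fin n, ((∑ i ∈ I, c i * (if (j:ℕ) + 1 ≤ i then 1 else 0) : ℕ) : ℤ))
        = ((∑ i ∈ I, c i * i : ℕ) : ℤ) := by
      rw [← sum_coord_total n I hI c]; push_cast; ring
    rw [h2]
    exact_mod_cast hev

lemma sum_ite2_smul (n j : ℕ) (I : Finset ℕ) (hj : j ∈ I) :
    ∑ i ∈ I, (if i = j then 2 else 1) • Hspin n i = Hspin n j + ∑ i ∈ I, Hspin n i := by
  have h : ∀ i ∈ I, (if i = j then 2 else 1) • Hspin n i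
      = Hspin n i + (if i = j then Hspin n j else 0) := by
    intro i hi; split_ifs with h
    · subst h; rw [two_smul]
    · rw [one_smul, add_zero]
  rw [Finset.sum_congr rfl h, Finset.sum_add_distrib,
    Finset.sum_ite_eq' I j (fun _ => Hspin n j), if_pos hj, add_comm]

lemma sum_ite2_mul (j : ℕ) (I : Finset ℕ) (hj : j ∈ I) :
    ∑ i ∈ I, (if i = j then 2 else 1) * i = (∑ i ∈ I, i) + j := by
  have h : ∀ i ∈ I, (if i = j then 2 else 1) * i = i + (if i = j then j else 0) := by
    intro i hi; split_ifs with h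
    · subst h; ring
    · ring
  rw [Finset.sum_congr rfl h, Finset.sum_add_distrib,
    Finset.sum_ite_eq' I j (fun _ => j), if_pos hj]

lemma partialSum_add (n : ℕ) (v w : Fin n → ℝ) (k : ℕ) :
    partialSum n (v + w) k = partialSum n v k + partialSum n w k := by
  simp [partialSum, Finset.sum_add_distrib]

lemma partialSum_sum (n : ℕ) (I : Finset ℕ) (f : ℕ → Fin n → ℝ) (k : ℕ) :
    partialSum n (∑ i ∈ I, f i) k = ∑ i ∈ I, partialSum n (f i) k := by
  unfold partialSum
  rw [Finset.sum_comm]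
  exact Finset.sum_congr rfl fun j _ => by rw [Finset.sum_apply]

lemma partialSum_Hspin (n i k : ℕ) (hi : i ≤ n) :
    partialSum n (Hspin n i) k = ((min i k : ℕ) : ℝ) := by
  unfold partialSum Hspin
  rw [Finset.sum_filter]
  have h : ∀ j : Fin n,
      (if (j:ℕ)+1 ≤ k then (if (j:ℕ)+1 ≤ i then (1:ℝ) else 0) else 0)
        = (if (j:ℕ)+1 ≤ min i k then 1 else 0) := by
    intro j
    have hcond : ((j:ℕ)+1 ≤ k ∧ (j:ℕ)+1 ≤ i) ↔ (j:ℕ)+1 ≤ min i k := by omega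
    rw [← ite_and, if_congr hcond rfl rfl]
  rw [Finset.sum_congr rfl (fun j _ => h j), sum_fin_ite_lt_real]
  rw [min_eq_left (le_trans (min_le_left i k) hi)]

lemma tsum_card (I : Finset ℕ) (k : ℕ) :
    ∑ t ∈ Finset.Icc 1 k, ((I.filter fun i => t ≤ i).card : ℝ)
      = ∑ i ∈ I, ((min i k : ℕ) : ℝ) := by
  have h : ∀ t, ((I.filter fun i => t ≤ i).card : ℝ)
      = ∑ i ∈ I, (if t ≤ i then (1:ℝ) else 0) := fun t => (Finset.sum_boole _ _).symm
  rw [Finset.sum_congr rfl (fun t _ => h t), Finset.sum_comm]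
  refine Finset.sum_congr rfl fun i hi => ?_
  rw [Finset.sum_boole]
  have : (Finset.Icc 1 k).filter (fun t => t ≤ i) = Finset.Icc 1 (min i k) := by
    ext t; simp only [Finset.mem_filter, Finset.mem_Icc]; omega
  rw [this, Nat.card_Icc]
  simp

/-- If `Σ_{i∈I} i` is odd, the `I`-canonical elements of `Spin(2n+1)`
are precisely the `ξ_I^j = H_j + ξ_I` for `j ∈ I` odd, with the stated uniton numbers. -/
theorem spin_odd_canonical_odd (n : ℕ) (hn : 1 ≤ n) (I : Finset ℕ)
    (hI : I ⊆ Finset.Icc 1 n) (hne : I.Nonempty) (hodd : Odd (∑ i ∈ I, i)) :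
    ICanonSet n (JSpin n) (Hspin n) I =
      {ξ | ∃ j ∈ I, Odd j ∧ ξ = Hspin n j + ∑ i ∈ I, Hspin n i} ∧
    (∀ j ∈ I, Odd j → ∀ k : ℕ, 1 ≤ k → k < n →
      2 * partialSum n (Hspin n j + ∑ i ∈ I, Hspin n i) k =
        2 * (∑ t ∈ Finset.Icc 1 k, ((I.filter fun i => t ≤ i).card : ℝ)) +
          2 * (min j k : ℝ)) ∧
    (∀ j ∈ I, Odd j →
      partialSum n (Hspin n j + ∑ i ∈ I, Hspin n i) n =
        (∑ t ∈ Finset.Icc 1 n, ((I.filter fun i => t ≤ i).card : ℝ)) + (j : ℝ)) := by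
  have hle : ∀ i ∈ I, i ≤ n := fun i hi => (Finset.mem_Icc.mp (hI hi)).2
  refine ⟨?_, ?_, ?_⟩
  · ext ξ
    simp only [ICanonSet, Set.mem_setOf_eq]
    constructor
    · rintro ⟨c, hc1, rfl, hmem, hmin⟩
      rw [mem_JSpin_iff n I hI c] at hmem
      have hsplit : ∑ i ∈ I, c i * i = (∑ i ∈ I, (c i - 1) * i) + ∑ i ∈ I, i := by
        rw [← Finset.sum_add_distrib]
        refine Finset.sum_congr rfl fun i hi => ?_
        obtain ⟨m, hm⟩ := Nat.exists_eq_add_of_le (hc1 i hi)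
        rw [hm]
        have h1 : 1 + m - 1 = m := by omega
        rw [h1]; ring
      have hodd2 : Odd (∑ i ∈ I, (c i - 1) * i) := by
        rw [hsplit] at hmem
        rw [Nat.odd_iff] at hodd ⊢
        rw [Nat.even_iff] at hmem
        omega
      have hex : ∃ j ∈ I, Odd ((c j - 1) * j) := by
        by_contra h
        push_neg at h
        simp only [Nat.not_odd_iff_even] at h
        have heven : Even (∑ i ∈ I, (c i - 1) * i) := Finset.even_sum (f := fun i => (c i - 1) * i) h
        exact (Nat.not_odd_iff_even.mpr heven) hodd2
      obtain ⟨j, hjI, hj⟩ := hex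
      rw [Nat.odd_mul] at hj
      obtain ⟨hjc, hjodd⟩ := hj
      have hcj2 : 2 ≤ c j := by
        rcases hjc with ⟨m, hm⟩
        have := hc1 j hjI
        omega
      refine ⟨j, hjI, hjodd, ?_⟩
      have h1 : ∀ i ∈ I, 1 ≤ (if i = j then 2 else 1) ∧ (if i = j then 2 else 1) ≤ c i := by
        intro i hi
        split_ifs with h
        · subst h; exact ⟨one_le_two, hcj2⟩
        · exact ⟨le_refl 1, hc1 i hi⟩
      have h2 : (∑ i ∈ I, (if i = j then 2 else 1) • Hspin n i) ∈ JSpin n := by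
        rw [mem_JSpin_iff n I hI]
        have hmul : ∀ i ∈ I, (if i = j then 2 else 1) * i
            = (fun i => if i = j then 2 else 1) i * i := fun i _ => rfl
        rw [show (∑ i ∈ I, (fun i => if i = j then 2 else 1) i * i)
            = ∑ i ∈ I, (if i = j then 2 else 1) * i from rfl, sum_ite2_mul j I hjI]
        rw [Nat.odd_iff] at hodd hjodd
        rw [Nat.even_iff]
        omega
      have h3 := hmin _ h1 h2
      rw [show (∑ i ∈ I, (fun i => if i = j then 2 else 1) i • Hspin n i)
          = ∑ i ∈ I, (if i = j then 2 else 1) • Hspin n i from rfl,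
        sum_ite2_smul n j I hjI] at h3
      exact h3.symm
    · rintro ⟨j, hjI, hjodd, rfl⟩
      refine ⟨fun i => if i = j then 2 else 1, fun i hi => by dsimp only; split <;> omega,
        (sum_ite2_smul n j I hjI).symm, ?_, ?_⟩
      · rw [← sum_ite2_smul n j I hjI, mem_JSpin_iff n I hI, sum_ite2_mul j I hjI]
        rw [Nat.odd_iff] at hodd hjodd
        rw [Nat.even_iff]
        omega
      · intro c' hc' hmem'
        rw [mem_JSpin_iff n I hI] at hmem'
        have hcj : c' j ≤ 2 := by
          have := (hc' j hjI).2
          simpa using this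
        have hc'eq : ∀ i ∈ I, i ≠ j → c' i = 1 := by
          intro i hi hne'
          have h := hc' i hi
          simp only [if_neg hne'] at h
          omega
        have hsum : ∑ i ∈ I, c' i * i = (∑ i ∈ I, i) + (c' j - 1) * j := by
          have h : ∀ i ∈ I, c' i * i = i + (if i = j then (c' j - 1) * j else 0) := by
            intro i hi
            split_ifs with h
            · subst h
              obtain ⟨m, hm⟩ := Nat.exists_eq_add_of_le (hc' i hi).1
              rw [hm]
              have h1 : 1 + m - 1 = m := by omega
              rw [h1]; ring
            · rw [hc'eq i hi h, one_mul, add_zero]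
          rw [Finset.sum_congr rfl h, Finset.sum_add_distrib,
            Finset.sum_ite_eq' I j (fun _ => (c' j - 1) * j), if_pos hjI]
        rw [hsum] at hmem'
        have hc'j2 : c' j = 2 := by
          rcases Nat.lt_or_ge (c' j) 2 with h | h
          · exfalso
            have h1 : c' j = 1 := by have := (hc' j hjI).1; omega
            rw [h1] at hmem'
            simp only [Nat.sub_self, zero_mul, add_zero] at hmem'
            exact (Nat.not_odd_iff_even.mpr hmem') hodd
          · omega
        rw [← sum_ite2_smul n j I hjI]
        refine Finset.sum_congr rfl fun i hi => ?_
        congr 1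
        split_ifs with h
        · subst h; exact hc'j2
        · exact hc'eq i hi h
  · intro j hjI hjodd k hk1 hkn
    have hjn : j ≤ n := hle j hjI
    rw [partialSum_add, partialSum_Hspin n j k hjn, partialSum_sum, tsum_card]
    rw [Finset.sum_congr rfl (fun i hi => partialSum_Hspin n i k (hle i hi))]
    simp only [Nat.cast_min]
    ring
  · intro j hjI hjodd
    have hjn : j ≤ n := hle j hjI
    rw [partialSum_add, partialSum_Hspin n j n hjn, partialSum_sum, tsum_card]
    rw [Finset.sum_congr rfl (fun i hi => partialSum_Hspin n i n (hle i hi))]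
    rw [min_eq_left hjn]
    ring
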